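/- Assume n ≥ 2 and let (Mᵢ, φ_{ij}) be descent data over (S,(Sᵢ)). Let F ⊆ ∏_{i=1}^{n-1} Sᵢ be the subring of compatible tuples (an S-algebra via s ↦ (qᵢ(s))_{i<n}), and let M' = {(mᵢ)_{i<n} ∈ ∏_{i<n} Mᵢ : for all i ≠ j < n, φ_{ij}(mᵢ mod IⱼMᵢ) = mⱼ mod IᵢMⱼ} be the fiber product module of the first n−1 pieces of the data. Then there is an S-linear isomorphism Mₙ ⊗_S F ≅ M'/(IₙM'). -/

import Mathlib

/-!
Over `R = k[x₁,…,xₙ]/(x₁⋯xₙ)` each `xᵢ` is a nonzerodivisor modulo the ideal of any nonempty set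
of the other variables (a monomial computation); flat base change carries this to `S`, and, by
splitting off a free module, to the finite projective `S ⧸ Iₜ`-modules `Mₜ`. Regularity gives a
Chinese remainder theorem for the ideals `Iᵢ`: `⋂ᵢ Iᵢ = (∏ᵢ xᵢ)` and pairwise compatible residues
glue, in `S` and in each `Mₜ` modulo `Iₜ`.

Hence `F ≅ S ⧸ (x₁⋯xₙ₋₁)`, and `Mₙ ⊗ F ≅ Mₙ ⧸ (x₁⋯xₙ₋₁)Mₙ` is the image of the diagonal map
`Mₙ → ∏_{i<n} Mₙ ⧸ IᵢMₙ`. Gluing lets any compatible family on a set of indices be extended one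
index at a time, so the map `M' → ∏_{i<n} Mₙ ⧸ IᵢMₙ`, `(mᵢ) ↦ (φᵢₙ mᵢ)`, has the same image; its
kernel is `IₙM'`, because `xₙ` is regular on `Mⱼ ⧸ IᵢMⱼ`.
-/

set_option maxHeartbeats 1000000
set_option synthInstance.maxHeartbeats 400000

open MvPolynomial TensorProduct

/-- The principal ideal `(x₁ ⋯ xₙ)` in `k[x₁,…,xₙ]`. -/
noncomputable abbrev sncIdeal (k : Type) [Field k] (n : ℕ) : Ideal (MvPolynomial (Fin n) k) :=
  Ideal.span {∏ i : Fin n, (X i : MvPolynomial (Fin n) k)}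

/-- The simple normal crossings model `R = k[x₁,…,xₙ]/(x₁⋯xₙ)`. -/
abbrev SNCModel (k : Type) [Field k] (n : ℕ) : Type :=
  MvPolynomial (Fin n) k ⧸ sncIdeal k n

/-- For an algebra `S` over the simple normal crossings model, the ideal `Iᵢ ⊆ S`
generated by the image of `xᵢ`. -/
def xIdeal (k : Type) [Field k] (n : ℕ) (S : Type) [CommRing S]
    [Algebra (SNCModel k n) S] (i : Fin n) : Ideal S :=
  Ideal.span {algebraMap (SNCModel k n) S (Ideal.Quotient.mk (sncIdeal k n) (X i))}

/-- The natural map `M ⧸ p → M ⧸ q` for submodules `p ≤ q`. -/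
def qfactor {S : Type*} [CommRing S] {M : Type*} [AddCommGroup M] [Module S M]
    {p q : Submodule S M} (h : p ≤ q) : (M ⧸ p) →ₗ[S] M ⧸ q :=
  Submodule.mapQ p q LinearMap.id fun _ hx => h hx

/-- In a quotient `B ⧸ (J • ⊤)`, every element of `I ≤ J` acts by zero. -/
lemma smul_quot_top_eq_zero {S : Type*} [CommRing S] {B : Type*} [AddCommGroup B]
    [Module S B] {I J : Ideal S} (h : I ≤ J) {r : S} (hr : r ∈ I)
    (z : B ⧸ (J • (⊤ : Submodule S B))) : r • z = 0 := by
  obtain ⟨y, rfl⟩ := Submodule.Quotient.mk_surjective _ z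
  rw [← Submodule.Quotient.mk_smul, Submodule.Quotient.mk_eq_zero]
  exact Submodule.smul_mem_smul (h hr) Submodule.mem_top

/-- `Ideal.Quotient.factor` as an `S`-algebra homomorphism. -/
def factorAlgHom {S : Type*} [CommRing S] (I J : Ideal S) (h : I ≤ J) :
    (S ⧸ I) →ₐ[S] S ⧸ J :=
  { Ideal.Quotient.factor h with
    commutes' := fun s => by
      simp [Ideal.Quotient.algebraMap_eq, RingHom.toMonoidHom_eq_coe] }

section Compat

variable (k : Type) [Field k] (n : ℕ) (S : Type) [CommRing S] [Algebra (SNCModel k n) S]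

/-- The subalgebra of compatible tuples `(sᵢ)ᵢ` in `∏_{i ∈ ι} S/I_{e i}`: tuples whose
entries agree pairwise in `S/(I_{e i} + I_{e j})`. -/
def compatAlg {ι : Type} (e : ι → Fin n) :
    Subalgebra S (∀ i : ι, S ⧸ xIdeal k n S (e i)) :=
  ⨅ (i : ι) (j : ι) (_ : i ≠ j),
    AlgHom.equalizer
      ((factorAlgHom (xIdeal k n S (e i)) (xIdeal k n S (e i) ⊔ xIdeal k n S (e j))
          le_sup_left).comp (Pi.evalAlgHom S (fun i : ι => S ⧸ xIdeal k n S (e i)) i))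
      ((factorAlgHom (xIdeal k n S (e j)) (xIdeal k n S (e i) ⊔ xIdeal k n S (e j))
          le_sup_right).comp (Pi.evalAlgHom S (fun i : ι => S ⧸ xIdeal k n S (e i)) j))


end Compat

section Hierarchical

variable (k : Type) [Field k] (m : ℕ) (S : Type) [CommRing S]
  [Algebra (SNCModel k (m + 1)) S]
variable (M : Fin (m + 1) → Type) [∀ i, AddCommGroup (M i)] [∀ i, Module S (M i)]
variable (φ : ∀ i j : Fin (m + 1), i ≠ j →
  ((M i ⧸ xIdeal k (m + 1) S j • (⊤ : Submodule S (M i))) ≃ₗ[S]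
    (M j ⧸ xIdeal k (m + 1) S i • (⊤ : Submodule S (M j)))))

/-- The fiber product module `M₁ ×_φ ⋯ ×_φ M_{n-1}` of the first `n-1` pieces of the
descent data. -/
def fiberProdFirst : Submodule S (∀ i : Fin m, M i.castSucc) :=
  ⨅ (i : Fin m) (j : Fin m) (h : i ≠ j),
    LinearMap.eqLocus
      ((φ i.castSucc j.castSucc ((Fin.castSucc_injective m).ne h)).toLinearMap.comp
        ((Submodule.mkQ
          (xIdeal k (m + 1) S j.castSucc • (⊤ : Submodule S (M i.castSucc)))).comp
          (LinearMap.proj i)))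
      ((Submodule.mkQ
        (xIdeal k (m + 1) S i.castSucc • (⊤ : Submodule S (M j.castSucc)))).comp
        (LinearMap.proj j))

end Hierarchical

theorem MvPolynomial.isSMulRegular_X_quotient_span_X {σ R : Type*} [CommRing R] {s : Set σ}
    {i : σ} (hi : i ∉ s) :
    IsSMulRegular (MvPolynomial σ R ⧸ Ideal.span (X '' s : Set (MvPolynomial σ R)))
      (X i : MvPolynomial σ R) := by
  refine IsSMulRegular.of_right_eq_zero_of_smul fun f hf => ?_
  obtain ⟨f, rfl⟩ := Ideal.Quotient.mk_surjective f
  change Ideal.Quotient.mk _ (X i * f) = 0 at hf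
  rw [Ideal.Quotient.eq_zero_iff_mem, mem_ideal_span_X_image, mul_comm, support_mul_X] at hf
  rw [Ideal.Quotient.eq_zero_iff_mem, mem_ideal_span_X_image]
  intro d hd
  obtain ⟨u, hu, hdu⟩ := hf _ (Finset.mem_map_of_mem _ hd)
  have hui : i ≠ u := fun h => hi (h ▸ hu)
  exact ⟨u, hu, by simpa [Finsupp.single_apply, hui] using hdu⟩

theorem IsSMulRegular.quotient_map_of_flat {R S : Type*} [CommRing R] [CommRing S] [Algebra R S]
    [Module.Flat R S] {J : Ideal R} {r : R} (h : IsSMulRegular (R ⧸ J) r) :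
    IsSMulRegular (S ⧸ J.map (algebraMap R S)) (algebraMap R S r) := by
  let f : (R ⧸ J) →ₗ[R] S ⧸ J.map (algebraMap R S) :=
    (Ideal.quotientMapₐ _ (Algebra.ofId R S) Ideal.le_comap_map).toLinearMap
  refine h.of_flat_of_isBaseChange (f := f) (IsBaseChange.of_equiv
    (Algebra.TensorProduct.quotIdealMapEquivTensorQuot S J).symm.toLinearEquiv fun x => ?_)
  obtain ⟨x, rfl⟩ := Ideal.Quotient.mk_surjective x
  simp only [AlgEquiv.toLinearEquiv_symm, AlgEquiv.coe_symm_toLinearEquiv,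
    Algebra.TensorProduct.quotIdealMapEquivTensorQuot_symm_tmul, Algebra.smul_def, mul_one]
  rfl

theorem IsSMulRegular.quotient_map_mk {A : Type*} [CommRing A] {I J : Ideal A} (hIJ : I ≤ J)
    {a : A} (h : IsSMulRegular (A ⧸ J) a) :
    IsSMulRegular ((A ⧸ I) ⧸ J.map (Ideal.Quotient.mk I)) (Ideal.Quotient.mk I a) := by
  refine IsSMulRegular.of_right_eq_zero_of_smul fun f hf => ?_
  obtain ⟨f, rfl⟩ := Ideal.Quotient.mk_surjective f
  obtain ⟨f, rfl⟩ := Ideal.Quotient.mk_surjective f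
  change Ideal.Quotient.mk _ (Ideal.Quotient.mk I (a * f)) = 0 at hf
  rw [Ideal.Quotient.eq_zero_iff_mem, Ideal.mem_quotient_iff_mem hIJ] at hf ⊢
  rw [← Ideal.Quotient.eq_zero_iff_mem] at hf ⊢
  exact h.right_eq_zero_of_smul hf

-- `U` has to be nonempty: in `k[x₁,…,xₙ]/(x₁⋯xₙ)` the variables are zero divisors.
def IsRegularModSpans {B ι : Type*} [CommRing B] (x : ι → B) : Prop :=
  ∀ U : Finset ι, U.Nonempty → ∀ i ∉ U, IsSMulRegular (B ⧸ Ideal.span (x '' U)) (x i)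

noncomputable def sncVar (k : Type) [Field k] (n : ℕ) (S : Type) [CommRing S]
    [Algebra (SNCModel k n) S] (i : Fin n) : S :=
  algebraMap (SNCModel k n) S (Ideal.Quotient.mk (sncIdeal k n) (X i))

theorem xIdeal_eq_span_sncVar (k : Type) [Field k] (n : ℕ) (S : Type) [CommRing S]
    [Algebra (SNCModel k n) S] (i : Fin n) : xIdeal k n S i = Ideal.span {sncVar k n S i} :=
  rfl

theorem isRegularModSpans_sncModel (k : Type) [Field k] (n : ℕ) :
    IsRegularModSpans fun i : Fin n => Ideal.Quotient.mk (sncIdeal k n) (X i) := by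
  intro U ⟨u, hu⟩ i hi
  have hprod : sncIdeal k n ≤ Ideal.span (X '' U) := by
    rw [Ideal.span_le, Set.singleton_subset_iff]
    exact Ideal.mem_of_dvd _ (Finset.dvd_prod_of_mem _ (Finset.mem_univ u))
      (Ideal.subset_span ⟨u, hu, rfl⟩)
  have h := (isSMulRegular_X_quotient_span_X (R := k) hi).quotient_map_mk hprod
  rwa [Ideal.map_span, ← Set.image_comp] at h

theorem isRegularModSpans_sncVar (k : Type) [Field k] (n : ℕ) (S : Type) [CommRing S]
    [Algebra (SNCModel k n) S] [Module.Flat (SNCModel k n) S] :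
    IsRegularModSpans (sncVar k n S) := by
  intro U hU i hi
  have h := (isRegularModSpans_sncModel k n U hU i hi).quotient_map_of_flat (S := S)
  rwa [Ideal.map_span, ← Set.image_comp] at h

theorem Ideal.span_image_finset_insert {B ι : Type*} [CommRing B] [DecidableEq ι] (x : ι → B)
    (j : ι) (W : Finset ι) :
    Ideal.span (x '' ↑(insert j W)) = Ideal.span {x j} ⊔ Ideal.span (x '' W) := by
  rw [Finset.coe_insert, Set.image_insert_eq, Ideal.span_insert]

namespace IsRegularModSpans

variable {B ι : Type*} [CommRing B] {x : ι → B}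

theorem comp_injective {κ : Type*} (hx : IsRegularModSpans x) {e : κ → ι}
    (he : Function.Injective e) : IsRegularModSpans (x ∘ e) := by
  classical
  intro U hU i hi
  have h := hx (U.image e) (hU.image e) (e i) (by simpa [he.eq_iff] using hi)
  rwa [Finset.coe_image, ← Set.image_comp] at h

theorem mem_of_mul_mem (hx : IsRegularModSpans x) {U : Finset ι} (hU : U.Nonempty) {i : ι}
    (hi : i ∉ U) {f : B} (hf : f * x i ∈ Ideal.span (x '' U)) : f ∈ Ideal.span (x '' U) := by
  rw [← Ideal.Quotient.eq_zero_iff_mem] at hf ⊢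
  exact (hx U hU i hi).right_eq_zero_of_smul (by rwa [mul_comm] at hf)

theorem mem_of_mul_prod_mem (hx : IsRegularModSpans x) {T U : Finset ι} (hTU : Disjoint T U)
    (hU : U.Nonempty) {f : B} (hf : f * ∏ i ∈ T, x i ∈ Ideal.span (x '' U)) :
    f ∈ Ideal.span (x '' U) := by
  classical
  induction T using Finset.induction generalizing f with
  | empty => simpa using hf
  | insert j T hj ih =>
    rw [Finset.disjoint_insert_left] at hTU
    rw [Finset.prod_insert hj, ← mul_assoc] at hf
    exact hx.mem_of_mul_mem hU hTU.1 (ih hTU.2 hf)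

theorem mem_span_prod_sup (hx : IsRegularModSpans x) {T W : Finset ι} (hTW : Disjoint T W)
    {s : B} (hs : ∀ i ∈ T, s ∈ Ideal.span {x i} ⊔ Ideal.span (x '' W)) :
    s ∈ Ideal.span {∏ i ∈ T, x i} ⊔ Ideal.span (x '' W) := by
  classical
  induction T using Finset.induction generalizing s with
  | empty => simp
  | insert j T hj ih =>
    rw [Finset.disjoint_insert_left] at hTW
    obtain ⟨y, hy, z, hz, rfl⟩ :=
      Submodule.mem_sup.1 (ih hTW.2 fun i hi => hs i (Finset.mem_insert_of_mem hi))
    obtain ⟨c, rfl⟩ := Ideal.mem_span_singleton'.1 hy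
    -- `c ∏_T x` lies in `(x j) + I_W`, so `c` does too by regularity.
    have hc : c ∈ Ideal.span (x '' ↑(insert j W)) := by
      refine hx.mem_of_mul_prod_mem (Finset.disjoint_insert_right.2 ⟨hj, hTW.2⟩)
        (Finset.insert_nonempty j W) ?_
      rw [Ideal.span_image_finset_insert]
      simpa [mul_comm] using Submodule.sub_mem _ (hs j (Finset.mem_insert_self j T))
        (Submodule.mem_sup_right hz)
    rw [Ideal.span_image_finset_insert] at hc
    obtain ⟨v, hv, w, hw, rfl⟩ := Submodule.mem_sup.1 hc
    obtain ⟨a, rfl⟩ := Ideal.mem_span_singleton'.1 hv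
    rw [Finset.prod_insert hj,
      show (a * x j + w) * ∏ i ∈ T, x i + z = a * (x j * ∏ i ∈ T, x i) + (w * ∏ i ∈ T, x i + z)
        by ring]
    exact Submodule.add_mem _ (Submodule.mem_sup_left (Ideal.mem_span_singleton'.2 ⟨a, rfl⟩))
      (Submodule.mem_sup_right (Submodule.add_mem _ (Ideal.mul_mem_right _ _ hw) hz))

theorem exists_sub_mem_span_sup (hx : IsRegularModSpans x) {T W : Finset ι}
    (hTW : Disjoint T W) (f : ι → B)
    (hf : ∀ i ∈ T, ∀ j ∈ T,
      f i - f j ∈ Ideal.span {x i} ⊔ Ideal.span {x j} ⊔ Ideal.span (x '' W)) :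
    ∃ g, ∀ i ∈ T, g - f i ∈ Ideal.span {x i} ⊔ Ideal.span (x '' W) := by
  classical
  induction T using Finset.induction with
  | empty => simp
  | insert j T hj ih =>
    rw [Finset.disjoint_insert_left] at hTW
    obtain ⟨g, hg⟩ := ih hTW.2 fun i hi l hl =>
      hf i (Finset.mem_insert_of_mem hi) l (Finset.mem_insert_of_mem hl)
    have hd : ∀ i ∈ T, f j - g ∈ Ideal.span {x i} ⊔ Ideal.span (x '' ↑(insert j W)) := by
      intro i hi
      rw [Ideal.span_image_finset_insert, show f j - g = (f j - f i) - (g - f i) by ring]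
      refine Submodule.sub_mem _ ?_ ?_
      · have h := hf j (Finset.mem_insert_self j T) i (Finset.mem_insert_of_mem hi)
        rwa [sup_comm (Ideal.span {x j}), sup_assoc] at h
      · exact (sup_le_sup_left le_sup_right _ :
          Ideal.span {x i} ⊔ Ideal.span (x '' W) ≤ _) (hg i hi)
    have hTjW : Disjoint T (insert j W) := Finset.disjoint_insert_right.2 ⟨hj, hTW.2⟩
    obtain ⟨v, hv, w, hw, hvw⟩ := Submodule.mem_sup.1 (hx.mem_span_prod_sup hTjW hd)
    obtain ⟨c, rfl⟩ := Ideal.mem_span_singleton'.1 hv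
    rw [Ideal.span_image_finset_insert] at hw
    obtain ⟨zj, hzj, zw, hzw, rfl⟩ := Submodule.mem_sup.1 hw
    refine ⟨g + c * ∏ i ∈ T, x i + zw, fun i hi => ?_⟩
    rcases Finset.mem_insert.1 hi with rfl | hi
    · rw [show g + c * ∏ i ∈ T, x i + zw - f i = -zj by linear_combination hvw]
      exact Submodule.mem_sup_left (Submodule.neg_mem _ hzj)
    · rw [show g + c * ∏ i ∈ T, x i + zw - f i = (g - f i) + c * ∏ i ∈ T, x i + zw by ring]
      refine Submodule.add_mem _ (Submodule.add_mem _ (hg i hi) (Submodule.mem_sup_left ?_))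
        (Submodule.mem_sup_right hzw)
      exact Ideal.mem_span_singleton.2 (Dvd.dvd.mul_left (Finset.dvd_prod_of_mem _ hi) _)

end IsRegularModSpans

section QuotientModule

variable {S : Type*} [CommRing S] {I : Ideal S}

theorem pi_mem_smul_top_iff {ι : Type*} [Finite ι] (J : Ideal S) (v : ι → S ⧸ I) :
    v ∈ J • (⊤ : Submodule S (ι → S ⧸ I)) ↔ ∀ m, v m ∈ J.map (Ideal.Quotient.mk I) := by
  classical
  have := Fintype.ofFinite ι
  have hmem (a : S ⧸ I) : a ∈ J • (⊤ : Submodule S (S ⧸ I)) ↔ a ∈ J.map (Ideal.Quotient.mk I) := by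
    rw [Ideal.smul_top_eq_map, Submodule.restrictScalars_mem, Ideal.Quotient.algebraMap_eq]
  refine ⟨fun hv m => (hmem _).1 (Submodule.smul_top_le_comap_smul_top J (LinearMap.proj m) hv),
    fun hv => ?_⟩
  rw [← Finset.univ_sum_single v]
  exact Submodule.sum_mem _ fun m _ =>
    Submodule.smul_top_le_comap_smul_top J (LinearMap.single S _ m) ((hmem _).2 (hv m))

variable {P : Type*} [AddCommGroup P] [Module S P]

theorem mem_smul_top_iff_of_comp_eq_id {N : ℕ} {u : P →ₗ[S] Fin N → S ⧸ I}
    {p : (Fin N → S ⧸ I) →ₗ[S] P} (hpu : p ∘ₗ u = LinearMap.id) (J : Ideal S) (z : P) :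
    z ∈ J • (⊤ : Submodule S P) ↔ ∀ m, u z m ∈ J.map (Ideal.Quotient.mk I) := by
  rw [← pi_mem_smul_top_iff]
  refine ⟨fun hz => Submodule.smul_top_le_comap_smul_top J u hz, fun hz => ?_⟩
  rw [← LinearMap.id_apply (R := S) z, ← hpu]
  exact Submodule.smul_top_le_comap_smul_top J p hz

variable [Module (S ⧸ I) P] [IsScalarTower S (S ⧸ I) P]

variable (I P) in
theorem exists_comp_eq_id_pi_quotient [Module.Finite (S ⧸ I) P] [Module.Projective (S ⧸ I) P] :
    ∃ (N : ℕ) (u : P →ₗ[S] Fin N → S ⧸ I) (p : (Fin N → S ⧸ I) →ₗ[S] P),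
      p ∘ₗ u = LinearMap.id := by
  obtain ⟨N, p, u, -, -, hpu⟩ := Module.Finite.exists_comp_eq_id_of_projective (S ⧸ I) P
  exact ⟨N, u.restrictScalars S, p.restrictScalars S,
    LinearMap.ext fun z => LinearMap.congr_fun hpu z⟩

variable [Module.Finite (S ⧸ I) P] [Module.Projective (S ⧸ I) P]

theorem mem_smul_top_of_smul_mem {J : Ideal S} {c : S} (hc : ∀ s, s * c ∈ J ⊔ I → s ∈ J ⊔ I)
    {z : P} (hz : c • z ∈ J • (⊤ : Submodule S P)) : z ∈ J • (⊤ : Submodule S P) := by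
  obtain ⟨N, u, p, hpu⟩ := exists_comp_eq_id_pi_quotient I P
  rw [mem_smul_top_iff_of_comp_eq_id hpu] at hz ⊢
  intro m
  obtain ⟨s, hs⟩ := Ideal.Quotient.mk_surjective (u z m)
  have h := hz m
  rw [map_smul, Pi.smul_apply, ← hs, Algebra.smul_def, Ideal.Quotient.algebraMap_eq, ← map_mul,
    Ideal.mem_quotient_iff_mem_sup, mul_comm] at h
  rw [← hs, Ideal.mem_quotient_iff_mem_sup]
  exact hc s h

theorem mem_smul_top_of_forall_mem {ι : Type*} {T : Finset ι} {J : ι → Ideal S} {K : Ideal S}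
    (hJK : ∀ s, (∀ i ∈ T, s ∈ J i ⊔ I) → s ∈ K ⊔ I) {z : P}
    (hz : ∀ i ∈ T, z ∈ J i • (⊤ : Submodule S P)) : z ∈ K • (⊤ : Submodule S P) := by
  obtain ⟨N, u, p, hpu⟩ := exists_comp_eq_id_pi_quotient I P
  simp only [mem_smul_top_iff_of_comp_eq_id hpu] at hz ⊢
  intro m
  obtain ⟨s, hs⟩ := Ideal.Quotient.mk_surjective (u z m)
  rw [← hs, Ideal.mem_quotient_iff_mem_sup]
  exact hJK s fun i hi => Ideal.mem_quotient_iff_mem_sup.1 (hs ▸ hz i hi m)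

theorem exists_sub_mem_smul_top {ι : Type*} {T : Finset ι} {J : ι → Ideal S}
    (hJ : ∀ f : ι → S, (∀ i ∈ T, ∀ j ∈ T, f i - f j ∈ J i ⊔ J j ⊔ I) →
      ∃ g, ∀ i ∈ T, g - f i ∈ J i ⊔ I)
    (v : ι → P) (hv : ∀ i ∈ T, ∀ j ∈ T, v i - v j ∈ (J i ⊔ J j) • (⊤ : Submodule S P)) :
    ∃ w, ∀ i ∈ T, w - v i ∈ J i • (⊤ : Submodule S P) := by
  obtain ⟨N, u, p, hpu⟩ := exists_comp_eq_id_pi_quotient I P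
  choose lift hlift using Ideal.Quotient.mk_surjective (I := I)
  simp only [mem_smul_top_iff_of_comp_eq_id hpu] at hv
  have hg (m : Fin N) : ∃ g, ∀ i ∈ T, g - lift (u (v i) m) ∈ J i ⊔ I := by
    refine hJ _ fun i hi j hj => ?_
    rw [← Ideal.mem_quotient_iff_mem_sup, map_sub, hlift, hlift, ← Pi.sub_apply, ← map_sub]
    exact hv i hi j hj m
  choose g hg using hg
  refine ⟨p fun m => Ideal.Quotient.mk I (g m), fun i hi => ?_⟩
  have hvi : v i = p (u (v i)) := by rw [← LinearMap.comp_apply, hpu, LinearMap.id_apply]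
  rw [hvi, ← map_sub]
  refine Submodule.smul_top_le_comap_smul_top _ p ((pi_mem_smul_top_iff _ _).2 fun m => ?_)
  rw [Pi.sub_apply, ← hlift (u (v i) m), ← map_sub, Ideal.mem_quotient_iff_mem_sup]
  exact hg m i hi

end QuotientModule

theorem qfactor_mk {S : Type*} [CommRing S] {M : Type*} [AddCommGroup M] [Module S M]
    {p q : Submodule S M} (h : p ≤ q) (x : M) :
    qfactor h (Submodule.Quotient.mk x) = Submodule.Quotient.mk x :=
  rfl

theorem span_sncVar_singleton (k : Type) [Field k] {n : ℕ} (S : Type) [CommRing S]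
    [Algebra (SNCModel k n) S] (t : Fin n) :
    Ideal.span (sncVar k n S '' ↑({t} : Finset (Fin n))) = xIdeal k n S t := by
  rw [Finset.coe_singleton, Set.image_singleton]
  rfl

section SNCModules

variable {k : Type} [Field k] {n : ℕ} {S : Type} [CommRing S] [Algebra (SNCModel k n) S]
  [Module.Flat (SNCModel k n) S] {t : Fin n}
  {P : Type*} [AddCommGroup P] [Module S P] [Module (S ⧸ xIdeal k n S t) P]
  [IsScalarTower S (S ⧸ xIdeal k n S t) P] [Module.Finite (S ⧸ xIdeal k n S t) P]
  [Module.Projective (S ⧸ xIdeal k n S t) P]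

theorem mem_xIdeal_smul_top_of_sncVar_smul_mem {a c : Fin n} (hca : c ≠ a) (hct : c ≠ t)
    {z : P} (hz : sncVar k n S c • z ∈ xIdeal k n S a • (⊤ : Submodule S P)) :
    z ∈ xIdeal k n S a • (⊤ : Submodule S P) := by
  classical
  refine mem_smul_top_of_smul_mem (I := xIdeal k n S t) (fun s hs => ?_) hz
  have hU : Ideal.span (sncVar k n S '' ↑({a, t} : Finset (Fin n))) =
      xIdeal k n S a ⊔ xIdeal k n S t := by
    rw [Ideal.span_image_finset_insert, span_sncVar_singleton]
    rfl
  rw [← hU] at hs ⊢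
  exact (isRegularModSpans_sncVar k n S).mem_of_mul_mem (Finset.insert_nonempty _ _)
    (by simp [hca, hct]) hs

theorem mem_span_prod_smul_top_of_forall {T : Finset (Fin n)} (ht : t ∉ T) {z : P}
    (hz : ∀ a ∈ T, z ∈ xIdeal k n S a • (⊤ : Submodule S P)) :
    z ∈ Ideal.span {∏ a ∈ T, sncVar k n S a} • (⊤ : Submodule S P) := by
  refine mem_smul_top_of_forall_mem (I := xIdeal k n S t) (fun s hs => ?_) hz
  rw [← span_sncVar_singleton k S t] at hs ⊢
  exact (isRegularModSpans_sncVar k n S).mem_span_prod_sup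
    (Finset.disjoint_singleton_right.2 ht) hs

theorem exists_sub_mem_xIdeal_smul_top {T : Finset (Fin n)} (ht : t ∉ T) (v : Fin n → P)
    (hv : ∀ a ∈ T, ∀ b ∈ T,
      v a - v b ∈ (xIdeal k n S a ⊔ xIdeal k n S b) • (⊤ : Submodule S P)) :
    ∃ w, ∀ a ∈ T, w - v a ∈ xIdeal k n S a • (⊤ : Submodule S P) := by
  refine exists_sub_mem_smul_top (I := xIdeal k n S t) (fun f hf => ?_) v hv
  rw [← span_sncVar_singleton k S t] at hf ⊢
  exact (isRegularModSpans_sncVar k n S).exists_sub_mem_span_sup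
    (Finset.disjoint_singleton_right.2 ht) f hf

end SNCModules

section Descent

variable {k : Type} [Field k] {n : ℕ} {S : Type} [CommRing S] [Algebra (SNCModel k n) S]
  {M : Fin n → Type} [∀ i, AddCommGroup (M i)] [∀ i, Module S (M i)]
  (φ : ∀ i j : Fin n, i ≠ j →
    ((M i ⧸ xIdeal k n S j • (⊤ : Submodule S (M i))) ≃ₗ[S]
      (M j ⧸ xIdeal k n S i • (⊤ : Submodule S (M j)))))

def DescentSymm : Prop :=
  ∀ (i j : Fin n) (h : i ≠ j), φ j i h.symm = (φ i j h).symm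

def DescentCocycle : Prop :=
  ∀ (i j l : Fin n) (hij : i ≠ j) (hjl : j ≠ l) (hil : i ≠ l) (x : M i) (y : M j),
    φ i j hij (Submodule.Quotient.mk x) = Submodule.Quotient.mk y →
    qfactor (Submodule.smul_mono_left
        (le_sup_left : xIdeal k n S i ≤ xIdeal k n S i ⊔ xIdeal k n S j))
        (φ i l hil (Submodule.Quotient.mk x)) =
      qfactor (Submodule.smul_mono_left
        (le_sup_right : xIdeal k n S j ≤ xIdeal k n S i ⊔ xIdeal k n S j))
        (φ j l hjl (Submodule.Quotient.mk y))

def IsCompatibleOn (T : Finset (Fin n)) (y : ∀ a, M a) : Prop :=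
  ∀ a ∈ T, ∀ b ∈ T, ∀ h : a ≠ b,
    φ a b h (Submodule.Quotient.mk (y a)) = Submodule.Quotient.mk (y b)

variable {φ}

theorem IsCompatibleOn.congr {T : Finset (Fin n)} {y y' : ∀ a, M a} (hy : IsCompatibleOn φ T y)
    (hyy' : ∀ a ∈ T, y' a = y a) : IsCompatibleOn φ T y' := by
  intro a ha b hb h
  rw [hyy' a ha, hyy' b hb]
  exact hy a ha b hb h

theorem IsCompatibleOn.insert [DecidableEq (Fin n)] (hsymm : DescentSymm φ)
    {T : Finset (Fin n)} {y : ∀ a, M a} (hy : IsCompatibleOn φ T y) {r : Fin n}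
    (hr : ∀ a ∈ T, ∀ h : a ≠ r,
      φ a r h (Submodule.Quotient.mk (y a)) = Submodule.Quotient.mk (y r)) :
    IsCompatibleOn φ (insert r T) y := by
  intro a ha b hb hab
  rcases Finset.mem_insert.1 ha with rfl | haT <;> rcases Finset.mem_insert.1 hb with rfl | hbT
  · exact absurd rfl hab
  · rw [hsymm b a hab.symm, LinearEquiv.symm_apply_eq]
    exact (hr b hbT hab.symm).symm
  · exact hr a haT hab
  · exact hy a haT b hbT hab

variable [Module.Flat (SNCModel k n) S]
  [∀ i, Module (S ⧸ xIdeal k n S i) (M i)] [∀ i, IsScalarTower S (S ⧸ xIdeal k n S i) (M i)]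
  [∀ i, Module.Finite (S ⧸ xIdeal k n S i) (M i)]
  [∀ i, Module.Projective (S ⧸ xIdeal k n S i) (M i)]

theorem exists_isCompatibleOn_insert (hsymm : DescentSymm φ) (hcoc : DescentCocycle φ)
    {T : Finset (Fin n)} {y : ∀ a, M a} (hy : IsCompatibleOn φ T y) {r : Fin n} (hr : r ∉ T) :
    ∃ w : M r, IsCompatibleOn φ (insert r T) (Function.update y r w) := by
  classical
  have hlift (a : Fin n) (h : a ≠ r) : ∃ v : M r,
      Submodule.Quotient.mk v = φ a r h (Submodule.Quotient.mk (y a)) :=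
    Submodule.Quotient.mk_surjective _ _
  choose g hg using hlift
  have hne {a : Fin n} (ha : a ∈ T) : a ≠ r := fun h => hr (h ▸ ha)
  let v : Fin n → M r := fun a => if h : a = r then 0 else g a h
  have hv {a : Fin n} (ha : a ∈ T) : v a = g a (hne ha) := dif_neg (hne ha)
  obtain ⟨w, hw⟩ := exists_sub_mem_xIdeal_smul_top hr v fun a ha b hb => by
    rcases eq_or_ne a b with rfl | hab
    · simp
    -- the cocycle condition for `a, b, r` says the two lifts agree modulo `I_a + I_b`
    have h := hcoc a b r hab (hne hb) (hne ha) (y a) (y b) (hy a ha b hb hab)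
    rw [← hg, ← hg, qfactor_mk, qfactor_mk, Submodule.Quotient.eq] at h
    rwa [hv ha, hv hb]
  refine ⟨w, IsCompatibleOn.insert hsymm
    (hy.congr fun a ha => Function.update_of_ne (hne ha) _ _) fun a ha h => ?_⟩
  rw [Function.update_of_ne h, Function.update_self, ← hg, Submodule.Quotient.eq, ← hv ha]
  rw [← neg_sub]
  exact Submodule.neg_mem _ (hw a ha)

theorem exists_isCompatibleOn_univ (hsymm : DescentSymm φ) (hcoc : DescentCocycle φ)
    {T₀ : Finset (Fin n)} {y : ∀ a, M a} (hy : IsCompatibleOn φ T₀ y) :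
    ∃ y' : ∀ a, M a, (∀ a ∈ T₀, y' a = y a) ∧ IsCompatibleOn φ Finset.univ y' := by
  classical
  suffices h : ∀ T : Finset (Fin n),
      ∃ y' : ∀ a, M a, (∀ a ∈ T₀, y' a = y a) ∧ IsCompatibleOn φ (T₀ ∪ T) y' by
    rw [← Finset.union_eq_right.2 (Finset.subset_univ T₀)]
    exact h Finset.univ
  intro T
  induction T using Finset.induction with
  | empty => exact ⟨y, fun _ _ => rfl, by simpa using hy⟩
  | insert r T _ ih =>
    obtain ⟨y', hy'₀, hy'⟩ := ih
    rw [Finset.union_insert]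
    by_cases hr : r ∈ T₀ ∪ T
    · exact ⟨y', hy'₀, by rwa [Finset.insert_eq_of_mem hr]⟩
    obtain ⟨w, hw⟩ := exists_isCompatibleOn_insert hsymm hcoc hy' hr
    refine ⟨Function.update y' r w, fun a ha => ?_, hw⟩
    have har : a ≠ r := fun h => hr (Finset.mem_union_left _ (h ▸ ha))
    rw [Function.update_of_ne har, hy'₀ a ha]

end Descent

section CompatAlg

variable (k : Type) [Field k] (n : ℕ) (S : Type) [CommRing S] [Algebra (SNCModel k n) S]
  {ι : Type} {e : ι → Fin n}

theorem mem_compatAlg_iff (σ : ∀ i : ι, S ⧸ xIdeal k n S (e i)) :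
    σ ∈ compatAlg k n S e ↔ ∀ i j, i ≠ j →
      factorAlgHom _ _ le_sup_left (σ i) = factorAlgHom _ _ le_sup_right (σ j) := by
  simp only [compatAlg, Algebra.mem_iInf, AlgHom.mem_equalizer, AlgHom.coe_comp,
    Function.comp_apply, Pi.evalAlgHom_apply]

theorem algebraMap_compatAlg_apply (s : S) (i : ι) :
    (algebraMap S (compatAlg k n S e) s : ∀ i : ι, S ⧸ xIdeal k n S (e i)) i =
      Ideal.Quotient.mk _ s :=
  rfl

variable [Module.Flat (SNCModel k n) S] [Fintype ι]

theorem ker_algebraMap_compatAlg (he : Function.Injective e) :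
    RingHom.ker (algebraMap S (compatAlg k n S e)) = Ideal.span {∏ i, sncVar k n S (e i)} := by
  refine le_antisymm (fun s hs => ?_) ?_
  · have hs' (i : ι) : s ∈ Ideal.span {sncVar k n S (e i)} ⊔
        Ideal.span (sncVar k n S ∘ e '' ↑(∅ : Finset ι)) := by
      have := congrFun (congrArg Subtype.val hs) i
      rw [algebraMap_compatAlg_apply, ZeroMemClass.coe_zero, Pi.zero_apply,
        Ideal.Quotient.eq_zero_iff_mem] at this
      simpa [xIdeal_eq_span_sncVar] using this
    simpa using ((isRegularModSpans_sncVar k n S).comp_injective he).mem_span_prod_sup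
      (Finset.disjoint_empty_right Finset.univ) fun i _ => hs' i
  · rw [Ideal.span_le, Set.singleton_subset_iff, SetLike.mem_coe, RingHom.mem_ker]
    ext i
    exact Ideal.Quotient.eq_zero_iff_mem.2
      (Ideal.mem_span_singleton.2 (Finset.dvd_prod_of_mem _ (Finset.mem_univ i)))

theorem algebraMap_compatAlg_surjective (he : Function.Injective e) :
    Function.Surjective (algebraMap S (compatAlg k n S e)) := by
  rintro ⟨σ, hσ⟩
  rw [mem_compatAlg_iff] at hσ
  choose f hf using fun i => Ideal.Quotient.mk_surjective (σ i)
  obtain ⟨g, hg⟩ := ((isRegularModSpans_sncVar k n S).comp_injective he).exists_sub_mem_span_sup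
    (Finset.disjoint_empty_right Finset.univ) f fun i _ j _ => by
      rcases eq_or_ne i j with rfl | hij
      · simp
      have h := hσ i j hij
      rw [← hf i, ← hf j] at h
      change Ideal.Quotient.mk _ (f i) = Ideal.Quotient.mk _ (f j) at h
      rw [Ideal.Quotient.mk_eq_mk_iff_sub_mem] at h
      simpa [xIdeal_eq_span_sncVar] using h
  refine ⟨g, Subtype.ext (funext fun i => ?_)⟩
  change _ = σ i
  rw [algebraMap_compatAlg_apply, ← hf i, Ideal.Quotient.mk_eq_mk_iff_sub_mem]
  simpa [xIdeal_eq_span_sncVar] using hg i (Finset.mem_univ i)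

noncomputable def compatAlgEquiv (he : Function.Injective e) :
    (S ⧸ Ideal.span {∏ i, sncVar k n S (e i)}) ≃ₐ[S] compatAlg k n S e :=
  (Ideal.quotientEquivAlgOfEq S (ker_algebraMap_compatAlg k n S he).symm).trans
    (Ideal.quotientKerAlgEquivOfSurjective (f := Algebra.ofId S _)
      (algebraMap_compatAlg_surjective k n S he))

end CompatAlg

noncomputable def LinearMap.quotKerEquivQuotKerOfRangeEq {R M N P : Type*} [CommRing R]
    [AddCommGroup M] [Module R M] [AddCommGroup N] [Module R N] [AddCommGroup P] [Module R P]
    (f : M →ₗ[R] P) (g : N →ₗ[R] P) (h : LinearMap.range f = LinearMap.range g) :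
    (M ⧸ LinearMap.ker f) ≃ₗ[R] N ⧸ LinearMap.ker g :=
  f.quotKerEquivRange.trans ((LinearEquiv.ofEq _ _ h).trans g.quotKerEquivRange.symm)

section LastPiece

variable (k : Type) [Field k] {m : ℕ} (S : Type) [CommRing S] [Algebra (SNCModel k (m + 1)) S]
  (M : Fin (m + 1) → Type) [∀ i, AddCommGroup (M i)] [∀ i, Module S (M i)]
  {φ : ∀ i j : Fin (m + 1), i ≠ j →
    ((M i ⧸ xIdeal k (m + 1) S j • (⊤ : Submodule S (M i))) ≃ₗ[S]
      (M j ⧸ xIdeal k (m + 1) S i • (⊤ : Submodule S (M j))))}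

noncomputable def lastToQuotients : M (Fin.last m) →ₗ[S]
    ∀ i : Fin m, M (Fin.last m) ⧸ xIdeal k (m + 1) S i.castSucc •
      (⊤ : Submodule S (M (Fin.last m))) :=
  LinearMap.pi fun _ => Submodule.mkQ _

variable {M} (φ) in
noncomputable def fiberProdToQuotients : fiberProdFirst k m S M φ →ₗ[S]
    ∀ i : Fin m, M (Fin.last m) ⧸ xIdeal k (m + 1) S i.castSucc •
      (⊤ : Submodule S (M (Fin.last m))) :=
  LinearMap.pi fun i => (φ i.castSucc (Fin.last m) (Fin.castSucc_ne_last i)).toLinearMap ∘ₗ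
    Submodule.mkQ _ ∘ₗ LinearMap.proj i ∘ₗ (fiberProdFirst k m S M φ).subtype

theorem mem_fiberProdFirst_iff (v : ∀ i : Fin m, M i.castSucc) :
    v ∈ fiberProdFirst k m S M φ ↔ ∀ (i j : Fin m) (h : i ≠ j),
      φ i.castSucc j.castSucc ((Fin.castSucc_injective m).ne h)
        (Submodule.Quotient.mk (v i)) = Submodule.Quotient.mk (v j) := by
  simp only [fiberProdFirst, Submodule.mem_iInf, LinearMap.mem_eqLocus, LinearMap.coe_comp,
    Function.comp_apply, LinearMap.coe_proj, Function.eval, LinearEquiv.coe_coe,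
    Submodule.mkQ_apply]

theorem fiberProdToQuotients_eq_lastToQuotients_iff (z : fiberProdFirst k m S M φ)
    (w : M (Fin.last m)) :
    fiberProdToQuotients k S φ z = lastToQuotients k S M w ↔ ∀ i : Fin m,
      φ i.castSucc (Fin.last m) (Fin.castSucc_ne_last i)
        (Submodule.Quotient.mk ((z : ∀ i : Fin m, M i.castSucc) i)) = Submodule.Quotient.mk w :=
  funext_iff

variable [Module.Flat (SNCModel k (m + 1)) S]
  [∀ i, Module (S ⧸ xIdeal k (m + 1) S i) (M i)]
  [∀ i, IsScalarTower S (S ⧸ xIdeal k (m + 1) S i) (M i)]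
  [∀ i, Module.Finite (S ⧸ xIdeal k (m + 1) S i) (M i)]
  [∀ i, Module.Projective (S ⧸ xIdeal k (m + 1) S i) (M i)]

theorem ker_lastToQuotients :
    LinearMap.ker (lastToQuotients k S M) =
      Ideal.span {∏ i : Fin m, sncVar k (m + 1) S i.castSucc} •
        (⊤ : Submodule S (M (Fin.last m))) := by
  simp only [lastToQuotients, LinearMap.ker_pi, Submodule.ker_mkQ]
  refine le_antisymm (fun z hz => ?_) (le_iInf fun i => Submodule.smul_mono_left ?_)
  · rw [Submodule.mem_iInf] at hz
    have h := mem_span_prod_smul_top_of_forall (t := Fin.last m)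
      (T := Finset.univ.map Fin.castSuccEmb)
      (by simp) (z := z) (by simpa using hz)
    rwa [Finset.prod_map] at h
  · rw [Ideal.span_le, Set.singleton_subset_iff]
    exact Ideal.mem_span_singleton.2 (Finset.dvd_prod_of_mem _ (Finset.mem_univ i))

theorem ker_fiberProdToQuotients :
    LinearMap.ker (fiberProdToQuotients k S φ) =
      xIdeal k (m + 1) S (Fin.last m) • (⊤ : Submodule S (fiberProdFirst k m S M φ)) := by
  refine le_antisymm (fun z hz => ?_) (Submodule.smul_le.2 fun r hr z _ => ?_)
  · have hdiv (i : Fin m) : ∃ u : M i.castSucc,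
        sncVar k (m + 1) S (Fin.last m) • u = (z : ∀ i : Fin m, M i.castSucc) i := by
      have h := congrFun (LinearMap.mem_ker.1 hz) i
      change φ _ _ _ (Submodule.Quotient.mk _) = 0 at h
      rw [LinearEquiv.map_eq_zero_iff, Submodule.Quotient.mk_eq_zero, xIdeal_eq_span_sncVar,
        Submodule.ideal_span_singleton_smul, Submodule.mem_smul_pointwise_iff_exists] at h
      obtain ⟨u, -, hu⟩ := h
      exact ⟨u, hu⟩
    choose u hu using hdiv
    have hu_mem : u ∈ fiberProdFirst k m S M φ := by
      refine (mem_fiberProdFirst_iff k S M u).2 fun i j hij => ?_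
      obtain ⟨y, hy⟩ := Submodule.Quotient.mk_surjective _
        (φ _ _ ((Fin.castSucc_injective m).ne hij) (Submodule.Quotient.mk (u i)))
      rw [← hy, Submodule.Quotient.eq]
      -- `xₙ • (y - u j)` vanishes modulo `I_i`, and `xₙ` is regular modulo `I_i + I_j`.
      refine mem_xIdeal_smul_top_of_sncVar_smul_mem (t := j.castSucc)
        (Fin.castSucc_ne_last i).symm (Fin.castSucc_ne_last j).symm ?_
      rw [smul_sub, ← Submodule.Quotient.eq, Submodule.Quotient.mk_smul, hy, ← map_smul,
        ← Submodule.Quotient.mk_smul, hu, hu]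
      exact (mem_fiberProdFirst_iff k S M _).1 z.2 i j hij
    rw [show z = sncVar k (m + 1) S (Fin.last m) • ⟨u, hu_mem⟩ from
      Subtype.ext (funext fun i => (hu i).symm)]
    exact Submodule.smul_mem_smul (Ideal.mem_span_singleton_self _) Submodule.mem_top
  · rw [LinearMap.mem_ker]
    ext i
    change φ _ _ _ (Submodule.Quotient.mk (r • (z : ∀ i : Fin m, M i.castSucc) i)) = 0
    rw [Submodule.Quotient.mk_smul, smul_quot_top_eq_zero le_rfl hr, map_zero]

theorem range_lastToQuotients (hsymm : DescentSymm φ) (hcoc : DescentCocycle φ) :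
    LinearMap.range (lastToQuotients k S M) = LinearMap.range (fiberProdToQuotients k S φ) := by
  refine le_antisymm ?_ ?_
  · rintro - ⟨w, rfl⟩
    obtain ⟨y, hyw, hy⟩ := exists_isCompatibleOn_univ hsymm hcoc (T₀ := {Fin.last m})
      (y := Fin.lastCases (motive := M) w fun _ => 0) fun a ha b hb h => by
        rw [Finset.mem_singleton] at ha hb
        exact absurd (ha.trans hb.symm) h
    refine ⟨⟨fun i => y i.castSucc, (mem_fiberProdFirst_iff k S M _).2 fun i j h =>
      hy _ (Finset.mem_univ _) _ (Finset.mem_univ _) _⟩, ?_⟩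
    refine (fiberProdToQuotients_eq_lastToQuotients_iff k S M _ _).2 fun i => ?_
    rw [hy _ (Finset.mem_univ _) _ (Finset.mem_univ _) (Fin.castSucc_ne_last i),
      hyw _ (Finset.mem_singleton_self _), Fin.lastCases_last]
  · rintro - ⟨z, rfl⟩
    obtain ⟨y, hyz, hy⟩ := exists_isCompatibleOn_univ hsymm hcoc
      (T₀ := Finset.univ.map Fin.castSuccEmb)
      (y := Fin.lastCases (motive := M) 0 (z : ∀ i : Fin m, M i.castSucc)) fun a ha b hb h => by
        obtain ⟨i, -, rfl⟩ := Finset.mem_map.1 ha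
        obtain ⟨j, -, rfl⟩ := Finset.mem_map.1 hb
        simp only [Fin.castSuccEmb_apply, Fin.lastCases_castSucc]
        exact (mem_fiberProdFirst_iff k S M _).1 z.2 i j fun hij => h (congrArg _ hij)
    refine ⟨y (Fin.last m), ((fiberProdToQuotients_eq_lastToQuotients_iff k S M _ _).2
      fun i => ?_).symm⟩
    have hi := hyz i.castSucc (Finset.mem_map_of_mem _ (Finset.mem_univ i))
    rw [Fin.lastCases_castSucc] at hi
    rw [← hi]
    exact hy _ (Finset.mem_univ _) _ (Finset.mem_univ _) _

end LastPiece

theorem statement7_general (k : Type) [Field k] (m : ℕ)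
    (S : Type) [CommRing S] [Algebra (SNCModel k (m + 1)) S]
    [Module.Flat (SNCModel k (m + 1)) S]
    (M : Fin (m + 1) → Type) [∀ i, AddCommGroup (M i)] [∀ i, Module S (M i)]
    [∀ i, Module (S ⧸ xIdeal k (m + 1) S i) (M i)]
    [∀ i, IsScalarTower S (S ⧸ xIdeal k (m + 1) S i) (M i)]
    [∀ i, Module.Finite (S ⧸ xIdeal k (m + 1) S i) (M i)]
    [∀ i, Module.Projective (S ⧸ xIdeal k (m + 1) S i) (M i)]
    (φ : ∀ i j : Fin (m + 1), i ≠ j →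
      ((M i ⧸ xIdeal k (m + 1) S j • (⊤ : Submodule S (M i))) ≃ₗ[S]
        (M j ⧸ xIdeal k (m + 1) S i • (⊤ : Submodule S (M j)))))
    (hsymm : ∀ (i j : Fin (m + 1)) (h : i ≠ j), φ j i h.symm = (φ i j h).symm)
    (hcoc : ∀ (i j l : Fin (m + 1)) (hij : i ≠ j) (hjl : j ≠ l) (hil : i ≠ l)
      (x : M i) (y : M j),
      φ i j hij (Submodule.Quotient.mk x) = Submodule.Quotient.mk y →
      qfactor (Submodule.smul_mono_left
          (le_sup_left : xIdeal k (m + 1) S i ≤ xIdeal k (m + 1) S i ⊔ xIdeal k (m + 1) S j))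
          (φ i l hil (Submodule.Quotient.mk x)) =
        qfactor (Submodule.smul_mono_left
          (le_sup_right : xIdeal k (m + 1) S j ≤ xIdeal k (m + 1) S i ⊔ xIdeal k (m + 1) S j))
          (φ j l hjl (Submodule.Quotient.mk y))) :
    Nonempty
      ((M (Fin.last m) ⊗[S]
          (compatAlg k (m + 1) S (Fin.castSucc : Fin m → Fin (m + 1)))) ≃ₗ[S]
        (fiberProdFirst k m S M φ ⧸
          xIdeal k (m + 1) S (Fin.last m) •
            (⊤ : Submodule S (fiberProdFirst k m S M φ)))) := by
  exact ⟨(TensorProduct.congr (LinearEquiv.refl S _)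
      (compatAlgEquiv k (m + 1) S (Fin.castSucc_injective m)).symm.toLinearEquiv).trans <|
    (tensorQuotEquivQuotSMul _ _).trans <|
    (Submodule.quotEquivOfEq _ _ (ker_lastToQuotients k S M).symm).trans <|
    ((lastToQuotients k S M).quotKerEquivQuotKerOfRangeEq _
      (range_lastToQuotients k S M hsymm hcoc)).trans <|
    Submodule.quotEquivOfEq _ _ (ker_fiberProdToQuotients k S M)⟩

/-- there is an `S`-linear isomorphism `Mₙ ⊗_S F ≅ M'/(IₙM')`, where `F` is
the ring of compatible tuples in `∏_{i<n} Sᵢ` and `M'` is the fiber product module of the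
first `n-1` pieces of the descent data. -/
theorem statement7 (k : Type) [Field k] (m : ℕ) (hm : 1 ≤ m)
    (S : Type) [CommRing S] [Algebra (SNCModel k (m + 1)) S]
    [Module.Flat (SNCModel k (m + 1)) S]
    (M : Fin (m + 1) → Type) [∀ i, AddCommGroup (M i)] [∀ i, Module S (M i)]
    [∀ i, Module (S ⧸ xIdeal k (m + 1) S i) (M i)]
    [∀ i, IsScalarTower S (S ⧸ xIdeal k (m + 1) S i) (M i)]
    [∀ i, Module.Finite (S ⧸ xIdeal k (m + 1) S i) (M i)]
    [∀ i, Module.Projective (S ⧸ xIdeal k (m + 1) S i) (M i)]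
    (φ : ∀ i j : Fin (m + 1), i ≠ j →
      ((M i ⧸ xIdeal k (m + 1) S j • (⊤ : Submodule S (M i))) ≃ₗ[S]
        (M j ⧸ xIdeal k (m + 1) S i • (⊤ : Submodule S (M j)))))
    (hsymm : ∀ (i j : Fin (m + 1)) (h : i ≠ j), φ j i h.symm = (φ i j h).symm)
    (hcoc : ∀ (i j l : Fin (m + 1)) (hij : i ≠ j) (hjl : j ≠ l) (hil : i ≠ l)
      (x : M i) (y : M j),
      φ i j hij (Submodule.Quotient.mk x) = Submodule.Quotient.mk y →
      qfactor (Submodule.smul_mono_left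
          (le_sup_left : xIdeal k (m + 1) S i ≤ xIdeal k (m + 1) S i ⊔ xIdeal k (m + 1) S j))
          (φ i l hil (Submodule.Quotient.mk x)) =
        qfactor (Submodule.smul_mono_left
          (le_sup_right : xIdeal k (m + 1) S j ≤ xIdeal k (m + 1) S i ⊔ xIdeal k (m + 1) S j))
          (φ j l hjl (Submodule.Quotient.mk y))) :
    Nonempty
      ((M (Fin.last m) ⊗[S]
          (compatAlg k (m + 1) S (Fin.castSucc : Fin m → Fin (m + 1)))) ≃ₗ[S]
        (fiberProdFirst k m S M φ ⧸
          xIdeal k (m + 1) S (Fin.last m) •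
            (⊤ : Submodule S (fiberProdFirst k m S M φ)))) :=
  statement7_general k m S M φ hsymm hcoc
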